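/- Let (G,σ,w) be a positive-connected signed graph with consensus index ε₀, and let 0 < ε < ε₀. Then the function (i,j) ↦ √(Ω_ε(i,j)) is a metric on the vertex set V: it is nonnegative, vanishes exactly on the diagonal, is symmetric, and satisfies the triangle inequality √(Ω_ε(i,j)) ≤ √(Ω_ε(i,k)) + √(Ω_ε(k,j)) for all i,j,k ∈ V. -/

import Mathlib

/-!
`Ω_ε(i,j)` is the quadratic form of `L_ε†` at `e_i - e_j`. For `ε < ε₀`, `L_ε` is positive
semidefinite, hence so is `L_ε† = CᵀC`, and `√Ω_ε(i,j) = ‖C (e_i - e_j)‖` is a Euclidean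
seminorm of `e_i - e_j`, which gives the triangle inequality. If `Ω_ε(i,j) = 0`,
then `L_ε† (e_i - e_j) = 0`, hence `L_ε (e_i - e_j) = L_ε L_ε L_ε† (e_i - e_j) = 0`. But
`L_ε ≥ c L₊` for some `c > 0`, so the kernel of `L_ε` lies in that of `L₊`, which consists of the
constant vectors because the positive subgraph is connected; thus `i = j`.
-/

open Matrix BigOperators

open scoped Classical

/-- Moore–Penrose pseudoinverse of a square real matrix (chosen via the
defining Penrose equations; it is unique when it exists). -/
noncomputable def pinv {n : ℕ} (A : Matrix (Fin n) (Fin n) ℝ) : Matrix (Fin n) (Fin n) ℝ :=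
  if h : ∃ B : Matrix (Fin n) (Fin n) ℝ,
      A * B * A = A ∧ B * A * B = B ∧ (A * B)ᵀ = A * B ∧ (B * A)ᵀ = B * A
  then h.choose else 0

/-- The eigenvalues of a symmetric real matrix, sorted in nondecreasing order. -/
noncomputable def sortedEigs {n : ℕ} (A : Matrix (Fin n) (Fin n) ℝ) : List ℝ :=
  if h : A.IsHermitian then (Finset.univ.val.map h.eigenvalues).sort (· ≤ ·) else []

/-- The second smallest eigenvalue (with multiplicity) of a symmetric real matrix. -/
noncomputable def secondSmallestEig {n : ℕ} (A : Matrix (Fin n) (Fin n) ℝ) : ℝ :=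
  (sortedEigs A).getD 1 0

/-- The largest eigenvalue of a symmetric real matrix. -/
noncomputable def largestEig {n : ℕ} (A : Matrix (Fin n) (Fin n) ℝ) : ℝ :=
  (sortedEigs A).getD (n - 1) 0

/-- A signed weighted graph on `n` vertices, given by the positive-part and
negative-part weight functions (an edge carries a positive weight and a sign;
`wplus i j > 0` iff `(i,j)` is a positive edge, `wminus i j > 0` iff it is a
negative edge). -/
structure SignedGraph (n : ℕ) where
  wplus : Fin n → Fin n → ℝ
  wminus : Fin n → Fin n → ℝ
  wplus_symm : ∀ i j, wplus i j = wplus j i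
  wminus_symm : ∀ i j, wminus i j = wminus j i
  wplus_nonneg : ∀ i j, 0 ≤ wplus i j
  wminus_nonneg : ∀ i j, 0 ≤ wminus i j
  wplus_diag : ∀ i, wplus i i = 0
  wminus_diag : ∀ i, wminus i i = 0
  disjoint : ∀ i j, wplus i j = 0 ∨ wminus i j = 0

namespace SignedGraph

variable {n : ℕ} (Γ : SignedGraph n)

/-- positive degree -/
noncomputable def dplus (i : Fin n) : ℝ := ∑ j, Γ.wplus i j

/-- negative degree -/
noncomputable def dminus (i : Fin n) : ℝ := ∑ j, Γ.wminus i j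

/-- Laplacian of the positive subgraph -/
noncomputable def Lplus : Matrix (Fin n) (Fin n) ℝ :=
  Matrix.of fun i j => if i = j then Γ.dplus i else -Γ.wplus i j

/-- Laplacian of the negative subgraph -/
noncomputable def Lminus : Matrix (Fin n) (Fin n) ℝ :=
  Matrix.of fun i j => if i = j then Γ.dminus i else -Γ.wminus i j

/-- the ε-repelling Laplacian `L₊ - ε L₋` -/
noncomputable def Leps (ε : ℝ) : Matrix (Fin n) (Fin n) ℝ := Γ.Lplus - ε • Γ.Lminus

/-- the positive subgraph as a simple graph -/
def posGraph : SimpleGraph (Fin n) := SimpleGraph.fromRel (fun i j => 0 < Γ.wplus i j)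

/-- the negative subgraph as a simple graph -/
def negGraph : SimpleGraph (Fin n) := SimpleGraph.fromRel (fun i j => 0 < Γ.wminus i j)

/-- the underlying simple graph -/
def underlying : SimpleGraph (Fin n) :=
  SimpleGraph.fromRel (fun i j => 0 < Γ.wplus i j + Γ.wminus i j)

/-- the signed graph is positive-connected -/
def PosConnected : Prop := Γ.posGraph.Connected

/-- the signed graph is negative-connected -/
def NegConnected : Prop := Γ.negGraph.Connected

/-- the consensus index ε₀ -/
noncomputable def consensusIndex : ℝ :=
  sSup {ε : ℝ | 0 < ε ∧ (Γ.Leps ε).PosSemidef ∧ (Γ.Leps ε).rank = n - 1}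

/-- the ε-repelling cost Ω_ε(i,j) = (e_i - e_j)ᵀ L_ε† (e_i - e_j) -/
noncomputable def cost (ε : ℝ) (i j : Fin n) : ℝ :=
  (Pi.single i 1 - Pi.single j 1) ⬝ᵥ (pinv (Γ.Leps ε)) *ᵥ (Pi.single i 1 - Pi.single j 1)

/-- the ε-repelling matrix Ω_ε -/
noncomputable def costMatrix (ε : ℝ) : Matrix (Fin n) (Fin n) ℝ :=
  Matrix.of fun i j => Γ.cost ε i j

/-- the node ε-repelling curvature, the unique solution of Ω_ε τ_ε = n·1 -/
noncomputable def tau (ε : ℝ) : Fin n → ℝ :=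
  (Γ.costMatrix ε)⁻¹ *ᵥ (fun _ => (n : ℝ))

/-- φ_ε = n · 1ᵀ Ω_ε⁻¹ 1 -/
noncomputable def phi (ε : ℝ) : ℝ :=
  (n : ℝ) * ((fun _ => (1 : ℝ)) ⬝ᵥ ((Γ.costMatrix ε)⁻¹ *ᵥ fun _ => (1 : ℝ)))

/-- the quantity Λ_ε(i,j) appearing in the edge ε-repelling curvature -/
noncomputable def Lam (ε : ℝ) (i j : Fin n) : ℝ :=
  (Γ.dminus i + Γ.dminus j)
    - (∑ k, Γ.cost ε j k * Γ.wminus i k + ∑ k, Γ.cost ε i k * Γ.wminus j k) / Γ.cost ε i j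

/-- the edge ε-repelling curvature ϑ_ε(i,j) -/
noncomputable def edgeCurv (ε : ℝ) (i j : Fin n) : ℝ :=
  2 * (Γ.tau ε i + Γ.tau ε j) / Γ.cost ε i j + (1 + ε) * Γ.Lam ε i j

end SignedGraph


open scoped MatrixOrder

namespace Matrix

variable {ι : Type*} [Fintype ι]

def IsMoorePenroseInverse (A B : Matrix ι ι ℝ) : Prop :=
  A * B * A = A ∧ B * A * B = B ∧ (A * B)ᵀ = A * B ∧ (B * A)ᵀ = B * A

namespace IsMoorePenroseInverse

variable {A B C : Matrix ι ι ℝ}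

theorem unique (hB : IsMoorePenroseInverse A B) (hC : IsMoorePenroseInverse A C) : B = C := by
  obtain ⟨hB₁, hB₂, hB₃, hB₄⟩ := hB
  obtain ⟨hC₁, hC₂, hC₃, hC₄⟩ := hC
  have hAB : A * B = A * C :=
    calc A * B = (A * C)ᵀ * (A * B)ᵀ := by rw [hC₃, hB₃, ← mul_assoc, hC₁]
      _ = A * C := by rw [← transpose_mul, ← mul_assoc, hB₁, hC₃]
  have hBA : B * A = C * A :=
    calc B * A = (B * A)ᵀ * (C * A)ᵀ := by rw [hB₄, hC₄, mul_assoc, ← mul_assoc A, hC₁]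
      _ = C * A := by rw [← transpose_mul, mul_assoc, ← mul_assoc A, hB₁, hC₄]
  rw [← hB₂, hBA, mul_assoc, hAB, ← mul_assoc, hC₂]

theorem transpose (hA : A.IsHermitian) (hB : IsMoorePenroseInverse A B) :
    IsMoorePenroseInverse A Bᵀ := by
  have hA' : Aᵀ = A := hA
  obtain ⟨h₁, h₂, h₃, h₄⟩ := hB
  refine ⟨?_, ?_, ?_, ?_⟩
  · simpa [transpose_mul, hA', mul_assoc] using congrArg (·ᵀ) h₁
  · simpa [transpose_mul, hA', mul_assoc] using congrArg (·ᵀ) h₂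
  · rw [transpose_mul, transpose_transpose, hA', ← h₄, transpose_mul, hA']
  · rw [transpose_mul, transpose_transpose, hA', ← h₃, transpose_mul, hA']

theorem isHermitian (hA : A.IsHermitian) (hB : IsMoorePenroseInverse A B) : B.IsHermitian :=
  (hB.transpose hA).unique hB

theorem posSemidef (hA : A.PosSemidef) (hB : IsMoorePenroseInverse A B) : B.PosSemidef := by
  have hBt : Bᵀ = B := hB.isHermitian hA.1
  rw [← hB.2.1]
  simpa [conjTranspose_eq_transpose_of_trivial, hBt, mul_assoc] using
    hA.conjTranspose_mul_mul_same B

theorem mulVec_eq_zero_of_mulVec_eq_zero (hA : A.IsHermitian) (hB : IsMoorePenroseInverse A B)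
    {v : ι → ℝ} (hv : B *ᵥ v = 0) : A *ᵥ v = 0 := by
  have hA' : Aᵀ = A := hA
  have : A = A * (A * B) := by
    conv_lhs => rw [← hA', ← hB.1, transpose_mul, hB.2.2.1, hA']
  rw [this, ← mulVec_mulVec, ← mulVec_mulVec, hv, mulVec_zero, mulVec_zero]

end IsMoorePenroseInverse

theorem IsHermitian.exists_isMoorePenroseInverse [DecidableEq ι] {A : Matrix ι ι ℝ}
    (hA : A.IsHermitian) : ∃ B, IsMoorePenroseInverse A B := by
  have : IsSelfAdjoint A := hA
  have : ContinuousOn (Inv.inv : ℝ → ℝ) (spectrum ℝ A) := A.finite_spectrum.continuousOn _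
  have hAB : A * cfc (Inv.inv : ℝ → ℝ) A = cfc (fun x : ℝ => x * x⁻¹) A := by
    rw [cfc_mul .., cfc_id' ..]
  have hBA : cfc (Inv.inv : ℝ → ℝ) A * A = cfc (fun x : ℝ => x⁻¹ * x) A := by
    rw [cfc_mul .., cfc_id' ..]
  refine ⟨cfc (Inv.inv : ℝ → ℝ) A, ?_, ?_, ?_, ?_⟩
  · calc _ = cfc (fun x : ℝ => x * x⁻¹ * x) A := by rw [cfc_mul .., cfc_mul .., cfc_id' ..]
      _ = A := by rw [cfc_congr fun x _ => mul_inv_mul_cancel x, cfc_id' ..]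
  · calc _ = cfc (fun x : ℝ => x⁻¹ * x * x⁻¹) A := by rw [cfc_mul .., cfc_mul .., cfc_id' ..]
      _ = _ := cfc_congr fun x _ => by field_simp
  · rw [hAB]; exact cfc_predicate (R := ℝ) _ A
  · rw [hBA]; exact cfc_predicate (R := ℝ) _ A

theorem IsHermitian.isMoorePenroseInverse_pinv {n : ℕ} {A : Matrix (Fin n) (Fin n) ℝ}
    (hA : A.IsHermitian) : IsMoorePenroseInverse A (pinv A) := by
  unfold pinv
  split_ifs with h
  · exact h.choose_spec
  · exact (h hA.exists_isMoorePenroseInverse).elim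

theorem PosSemidef.sqrt_dotProduct_mulVec_add_le {B : Matrix ι ι ℝ} (hB : B.PosSemidef)
    (x y : ι → ℝ) :
    √((x + y) ⬝ᵥ B *ᵥ (x + y)) ≤ √(x ⬝ᵥ B *ᵥ x) + √(y ⬝ᵥ B *ᵥ y) := by
  obtain ⟨C, rfl⟩ := CStarAlgebra.nonneg_iff_eq_star_mul_self.mp hB.nonneg
  have hnorm : ∀ z, √(z ⬝ᵥ (star C * C) *ᵥ z) = ‖WithLp.toLp 2 (C *ᵥ z)‖ := by
    intro z
    rw [EuclideanSpace.norm_eq, ← mulVec_mulVec, dotProduct_mulVec, star_eq_conjTranspose,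
      conjTranspose_eq_transpose_of_trivial, vecMul_transpose, dotProduct_comm]
    simp [dotProduct, sq]
  rw [hnorm, hnorm, hnorm, mulVec_add, WithLp.toLp_add]
  exact norm_add_le _ _

end Matrix

theorem SimpleGraph.Reachable.eq_of_forall_adj {V β : Type*} {G : SimpleGraph V} {f : V → β}
    (hf : ∀ u v, G.Adj u v → f u = f v) {u v : V} (h : G.Reachable u v) : f u = f v := by
  obtain ⟨p⟩ := h
  induction p with
  | nil => rfl
  | cons hadj _ ih => exact (hf _ _ hadj).trans ih

section WeightedLaplacian

variable {ι : Type*} [Fintype ι] [DecidableEq ι] (w : ι → ι → ℝ)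

noncomputable def weightedLaplacian : Matrix ι ι ℝ :=
  Matrix.of fun i j => if i = j then ∑ k, w i k else -w i j

variable {w}

theorem weightedLaplacian_mulVec (hdiag : ∀ i, w i i = 0) (x : ι → ℝ) (i : ι) :
    (weightedLaplacian w *ᵥ x) i = ∑ j, w i j * (x i - x j) := by
  have hsplit : ∀ j, (if i = j then ∑ k, w i k else -w i j) * x j
      = (if i = j then (∑ k, w i k) * x i else 0) - w i j * x j := by
    intro j
    split_ifs with h
    · subst h; simp [hdiag]
    · simp
  simp only [weightedLaplacian, mulVec, dotProduct, of_apply, hsplit, Finset.sum_sub_distrib,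
    Finset.sum_ite_eq, Finset.mem_univ, if_true, mul_sub, Finset.sum_mul]

theorem two_mul_dotProduct_weightedLaplacian_mulVec (hsymm : ∀ i j, w i j = w j i)
    (hdiag : ∀ i, w i i = 0) (x : ι → ℝ) :
    2 * (x ⬝ᵥ weightedLaplacian w *ᵥ x) = ∑ i, ∑ j, w i j * (x i - x j) ^ 2 := by
  have hq : x ⬝ᵥ weightedLaplacian w *ᵥ x = ∑ i, ∑ j, w i j * (x i * (x i - x j)) := by
    simp only [dotProduct, weightedLaplacian_mulVec hdiag, Finset.mul_sum]
    exact Finset.sum_congr rfl fun i _ => Finset.sum_congr rfl fun j _ => by ring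
  have hq' : x ⬝ᵥ weightedLaplacian w *ᵥ x = ∑ i, ∑ j, w i j * (x j * (x j - x i)) := by
    rw [hq, Finset.sum_comm]
    simp only [hsymm]
  rw [two_mul]
  nth_rw 1 [hq]
  rw [hq', ← Finset.sum_add_distrib]
  exact Finset.sum_congr rfl fun i _ => by rw [← Finset.sum_add_distrib]; congr 1; ext j; ring

theorem weightedLaplacian_transpose (hsymm : ∀ i j, w i j = w j i) :
    (weightedLaplacian w)ᵀ = weightedLaplacian w := by
  ext i j
  simp only [weightedLaplacian, transpose_apply, of_apply, eq_comm (a := j), hsymm j i]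
  split_ifs with h
  · subst h; rfl
  · rfl

variable (hw : ∀ i j, 0 ≤ w i j) (hsymm : ∀ i j, w i j = w j i) (hdiag : ∀ i, w i i = 0)
include hw hsymm hdiag

theorem dotProduct_weightedLaplacian_mulVec_nonneg (x : ι → ℝ) :
    0 ≤ x ⬝ᵥ weightedLaplacian w *ᵥ x := by
  have := two_mul_dotProduct_weightedLaplacian_mulVec hsymm hdiag x
  have : 0 ≤ ∑ i, ∑ j, w i j * (x i - x j) ^ 2 :=
    Finset.sum_nonneg fun i _ => Finset.sum_nonneg fun j _ => mul_nonneg (hw i j) (sq_nonneg _)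
  linarith

theorem eq_of_dotProduct_weightedLaplacian_mulVec_eq_zero {x : ι → ℝ}
    (hx : x ⬝ᵥ weightedLaplacian w *ᵥ x = 0) {i j : ι} (hij : 0 < w i j) : x i = x j := by
  have hsum := two_mul_dotProduct_weightedLaplacian_mulVec hsymm hdiag x
  rw [hx, mul_zero, eq_comm] at hsum
  have hterms (i j : ι) : 0 ≤ w i j * (x i - x j) ^ 2 := mul_nonneg (hw i j) (sq_nonneg _)
  have hterm := (Finset.sum_eq_zero_iff_of_nonneg fun j _ => hterms i j).mp
    ((Finset.sum_eq_zero_iff_of_nonneg fun i _ => Finset.sum_nonneg fun j _ => hterms i j).mp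
      hsum i (Finset.mem_univ i)) j (Finset.mem_univ j)
  rw [mul_eq_zero, sq_eq_zero_iff, sub_eq_zero] at hterm
  exact hterm.resolve_left hij.ne'

end WeightedLaplacian

namespace SignedGraph

variable {n : ℕ} (Γ : SignedGraph n)

theorem Lplus_eq_weightedLaplacian : Γ.Lplus = weightedLaplacian Γ.wplus := rfl

theorem Lminus_eq_weightedLaplacian : Γ.Lminus = weightedLaplacian Γ.wminus := rfl

theorem isHermitian_Leps (ε : ℝ) : (Γ.Leps ε).IsHermitian := by
  rw [IsHermitian, conjTranspose_eq_transpose_of_trivial, Leps, transpose_sub, transpose_smul,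
    Lplus_eq_weightedLaplacian, Lminus_eq_weightedLaplacian,
    weightedLaplacian_transpose Γ.wplus_symm, weightedLaplacian_transpose Γ.wminus_symm]

theorem dotProduct_Lplus_mulVec_nonneg (x : Fin n → ℝ) : 0 ≤ x ⬝ᵥ Γ.Lplus *ᵥ x :=
  dotProduct_weightedLaplacian_mulVec_nonneg Γ.wplus_nonneg Γ.wplus_symm Γ.wplus_diag x

theorem dotProduct_Lminus_mulVec_nonneg (x : Fin n → ℝ) : 0 ≤ x ⬝ᵥ Γ.Lminus *ᵥ x :=
  dotProduct_weightedLaplacian_mulVec_nonneg Γ.wminus_nonneg Γ.wminus_symm Γ.wminus_diag x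

theorem dotProduct_Leps_mulVec (ε : ℝ) (x : Fin n → ℝ) :
    x ⬝ᵥ Γ.Leps ε *ᵥ x = x ⬝ᵥ Γ.Lplus *ᵥ x - ε * (x ⬝ᵥ Γ.Lminus *ᵥ x) := by
  rw [Leps, sub_mulVec, smul_mulVec, dotProduct_sub, dotProduct_smul, smul_eq_mul]

-- For `0 < ε`, pick `ε < ε'` in the set defining `ε₀`: then `L_ε = (ε/ε') L_ε' + (1 - ε/ε') L₊`.
theorem exists_pos_mul_le_dotProduct_Leps_mulVec {ε : ℝ} (hε : ε < Γ.consensusIndex) :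
    ∃ c > 0, ∀ x, c * (x ⬝ᵥ Γ.Lplus *ᵥ x) ≤ x ⬝ᵥ Γ.Leps ε *ᵥ x := by
  rcases le_or_gt ε 0 with hε0 | hε0
  · refine ⟨1, one_pos, fun x => ?_⟩
    rw [dotProduct_Leps_mulVec]
    nlinarith [Γ.dotProduct_Lminus_mulVec_nonneg x]
  have hne : {ε' : ℝ | 0 < ε' ∧ (Γ.Leps ε').PosSemidef ∧ (Γ.Leps ε').rank = n - 1}.Nonempty := by
    by_contra h
    rw [Set.not_nonempty_iff_eq_empty] at h
    rw [consensusIndex, h, Real.sSup_empty] at hε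
    linarith
  obtain ⟨ε', ⟨hε'0, hε'psd, -⟩, hεε'⟩ := exists_lt_of_lt_csSup hne hε
  refine ⟨1 - ε / ε', by rwa [gt_iff_lt, sub_pos, div_lt_one hε'0], fun x => ?_⟩
  have hε' : 0 ≤ x ⬝ᵥ Γ.Leps ε' *ᵥ x := by simpa using hε'psd.dotProduct_mulVec_nonneg x
  have hinterp : x ⬝ᵥ Γ.Leps ε *ᵥ x
      = (1 - ε / ε') * (x ⬝ᵥ Γ.Lplus *ᵥ x) + ε / ε' * (x ⬝ᵥ Γ.Leps ε' *ᵥ x) := by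
    rw [dotProduct_Leps_mulVec, dotProduct_Leps_mulVec]
    field_simp
    ring
  rw [hinterp]
  have := mul_nonneg (div_pos hε0 hε'0).le hε'
  linarith

variable {Γ} {ε : ℝ}

theorem posSemidef_Leps (hε : ε < Γ.consensusIndex) : (Γ.Leps ε).PosSemidef := by
  obtain ⟨c, hc, hle⟩ := Γ.exists_pos_mul_le_dotProduct_Leps_mulVec hε
  refine .of_dotProduct_mulVec_nonneg (Γ.isHermitian_Leps ε) fun x => ?_
  simpa using (mul_nonneg hc.le (Γ.dotProduct_Lplus_mulVec_nonneg x)).trans (hle x)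

theorem eq_of_Leps_mulVec_eq_zero (hpc : Γ.PosConnected) (hε : ε < Γ.consensusIndex)
    {x : Fin n → ℝ} (hx : Γ.Leps ε *ᵥ x = 0) (i j : Fin n) : x i = x j := by
  obtain ⟨c, hc, hle⟩ := Γ.exists_pos_mul_le_dotProduct_Leps_mulVec hε
  have hplus : x ⬝ᵥ Γ.Lplus *ᵥ x = 0 := by
    have := hle x
    rw [hx, dotProduct_zero] at this
    exact le_antisymm (nonpos_of_mul_nonpos_right this hc) (Γ.dotProduct_Lplus_mulVec_nonneg x)
  have hedge {u v : Fin n} (huv : 0 < Γ.wplus u v) : x u = x v :=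
    eq_of_dotProduct_weightedLaplacian_mulVec_eq_zero Γ.wplus_nonneg Γ.wplus_symm Γ.wplus_diag
      hplus huv
  refine (hpc.preconnected i j).eq_of_forall_adj fun u v huv => ?_
  rcases (SimpleGraph.fromRel_adj _ u v).mp huv with ⟨-, huv | hvu⟩
  · exact hedge huv
  · exact (hedge hvu).symm

theorem posSemidef_pinv_Leps (hε : ε < Γ.consensusIndex) : (pinv (Γ.Leps ε)).PosSemidef :=
  (Γ.isHermitian_Leps ε).isMoorePenroseInverse_pinv.posSemidef (posSemidef_Leps hε)

theorem cost_nonneg (hε : ε < Γ.consensusIndex) (i j : Fin n) : 0 ≤ Γ.cost ε i j := by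
  have := (posSemidef_pinv_Leps hε).dotProduct_mulVec_nonneg (Pi.single i 1 - Pi.single j 1)
  rwa [star_trivial] at this

theorem cost_comm (i j : Fin n) : Γ.cost ε i j = Γ.cost ε j i := by
  rw [cost, cost, ← neg_sub (Pi.single i 1 : Fin n → ℝ), mulVec_neg, neg_dotProduct,
    dotProduct_neg, neg_neg]

theorem cost_eq_zero_iff (hpc : Γ.PosConnected) (hε : ε < Γ.consensusIndex) {i j : Fin n} :
    Γ.cost ε i j = 0 ↔ i = j := by
  refine ⟨fun h => ?_, fun h => by simp [cost, h]⟩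
  by_contra hij
  have hpinv : pinv (Γ.Leps ε) *ᵥ (Pi.single i 1 - Pi.single j 1) = 0 :=
    ((posSemidef_pinv_Leps hε).dotProduct_mulVec_zero_iff _).mp (by rwa [star_trivial])
  have hker := (Γ.isHermitian_Leps ε).isMoorePenroseInverse_pinv.mulVec_eq_zero_of_mulVec_eq_zero
    (Γ.isHermitian_Leps ε) hpinv
  have := eq_of_Leps_mulVec_eq_zero hpc hε hker i j
  norm_num [hij, Ne.symm hij] at this

theorem sqrt_cost_le_add (hε : ε < Γ.consensusIndex) (i j k : Fin n) :
    √(Γ.cost ε i j) ≤ √(Γ.cost ε i k) + √(Γ.cost ε k j) := by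
  have := (posSemidef_pinv_Leps hε).sqrt_dotProduct_mulVec_add_le
    (Pi.single i 1 - Pi.single k 1) (Pi.single k 1 - Pi.single j 1)
  rwa [sub_add_sub_cancel] at this

end SignedGraph

theorem stmt10_general {n : ℕ} (Γ : SignedGraph n) (hpc : Γ.PosConnected)
    (ε : ℝ) (hε : ε < Γ.consensusIndex) :
    (∀ i j : Fin n, 0 ≤ Real.sqrt (Γ.cost ε i j)) ∧
    (∀ i j : Fin n, Real.sqrt (Γ.cost ε i j) = 0 ↔ i = j) ∧
    (∀ i j : Fin n, Real.sqrt (Γ.cost ε i j) = Real.sqrt (Γ.cost ε j i)) ∧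
    (∀ i j k : Fin n,
      Real.sqrt (Γ.cost ε i j) ≤ Real.sqrt (Γ.cost ε i k) + Real.sqrt (Γ.cost ε k j)) :=
  ⟨fun _ _ => Real.sqrt_nonneg _,
    fun i j => (Real.sqrt_eq_zero (SignedGraph.cost_nonneg hε i j)).trans
      (SignedGraph.cost_eq_zero_iff hpc hε),
    fun i j => by rw [SignedGraph.cost_comm],
    SignedGraph.sqrt_cost_le_add hε⟩

/-- the square root of the ε-repelling cost is a metric on the
vertex set. -/
theorem stmt10 {n : ℕ} (Γ : SignedGraph n) (hpc : Γ.PosConnected)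
    (ε : ℝ) (hε0 : 0 < ε) (hε : ε < Γ.consensusIndex) :
    (∀ i j : Fin n, 0 ≤ Real.sqrt (Γ.cost ε i j)) ∧
    (∀ i j : Fin n, Real.sqrt (Γ.cost ε i j) = 0 ↔ i = j) ∧
    (∀ i j : Fin n, Real.sqrt (Γ.cost ε i j) = Real.sqrt (Γ.cost ε j i)) ∧
    (∀ i j k : Fin n,
      Real.sqrt (Γ.cost ε i j) ≤ Real.sqrt (Γ.cost ε i k) + Real.sqrt (Γ.cost ε k j)) :=
  stmt10_general Γ hpc ε hε
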